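/- Let G be a weighted digraph on n vertices with positive arc weights and Kirchhoff matrix L. For every τ > 0 the matrix I + τL is invertible, and the (i,j) entry of (I + τL)^{-1} equals (∑_{k=0}^{n-v} τ^k ε(F_k^{j→i})) / (∑_{k=0}^{n-v} τ^k ε(F_k)), where F_k is the set of spanning diverging forests of G with k arcs, F_k^{j→i} is the subset of those in which i belongs to the tree diverging from j, ε denotes the total weight (sum over forests of the product of arc weights), and v is the forest dimension of G. -/

import Mathlib

open scoped Classical
open Finset

variable {n : ℕ}

/-- The arc relation of a finite arc set. -/
def arcRel (F : Finset (Fin n × Fin n)) : Fin n → Fin n → Prop :=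
  fun a b => (a, b) ∈ F

/-- A diverging forest: no directed cycles, and every vertex has in-degree at most 1. -/
def IsDivForest (F : Finset (Fin n × Fin n)) : Prop :=
  (∀ v, ¬ Relation.TransGen (arcRel F) v v) ∧
  ∀ w z₁ z₂, (z₁, w) ∈ F → (z₂, w) ∈ F → z₁ = z₂

/-- `F` is a spanning diverging forest of the weighted digraph whose arcs are the
pairs of positive weight under `ε`. -/
def IsSpForest (ε : Fin n → Fin n → ℝ) (F : Finset (Fin n × Fin n)) : Prop :=
  (∀ p ∈ F, 0 < ε p.1 p.2) ∧ IsDivForest F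

/-- The weight of a forest: the product of its arc weights. -/
noncomputable def fweight (ε : Fin n → Fin n → ℝ) (F : Finset (Fin n × Fin n)) : ℝ :=
  ∏ p ∈ F, ε p.1 p.2

/-- The weight of a set of forests: the sum of the weights of its members. -/
noncomputable def swt (ε : Fin n → Fin n → ℝ)
    (S : Finset (Finset (Fin n × Fin n))) : ℝ :=
  ∑ F ∈ S, fweight ε F

/-- The set of spanning diverging forests with `k` arcs. -/
noncomputable def forestsK (ε : Fin n → Fin n → ℝ) (k : ℕ) :
    Finset (Finset (Fin n × Fin n)) :=
  Finset.univ.filter (fun F => IsSpForest ε F ∧ F.card = k)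

/-- The set of spanning diverging forests with `k` arcs in which vertex `i` belongs to
the tree diverging from `j` (so `j` is a root and `i` is reachable from `j`). -/
noncomputable def forestsKji (ε : Fin n → Fin n → ℝ) (k : ℕ) (j i : Fin n) :
    Finset (Finset (Fin n × Fin n)) :=
  (forestsK ε k).filter (fun F => (∀ u, (u, j) ∉ F) ∧ Relation.ReflTransGen (arcRel F) j i)

/-- The maximum number of arcs in a spanning diverging forest, equal to `n - v`
where `v` is the forest dimension. -/
noncomputable def maxArcs (ε : Fin n → Fin n → ℝ) : ℕ :=
  (Finset.univ.filter (fun F : Finset (Fin n × Fin n) => IsSpForest ε F)).sup Finset.card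

/-- The Kirchhoff matrix of the weighted digraph with weights `ε`. -/
noncomputable def Kirchhoff (ε : Fin n → Fin n → ℝ) : Matrix (Fin n) (Fin n) ℝ :=
  Matrix.of fun i j =>
    if i = j then ∑ k ∈ Finset.univ.filter (· ≠ i), ε k i else - ε j i

/-- The matrix of maximum out forests: entry `(i, j)` is the total weight of maximum
out forests in which `i` lies in the tree diverging from `j`. -/
noncomputable def Qmax (ε : Fin n → Fin n → ℝ) : Matrix (Fin n) (Fin n) ℝ :=
  Matrix.of fun i j => swt ε (forestsKji ε (maxArcs ε) j i)

/-- The normalized matrix of maximum out forests. -/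
noncomputable def Jbar (ε : Fin n → Fin n → ℝ) : Matrix (Fin n) (Fin n) ℝ :=
  (swt ε (forestsK ε (maxArcs ε)))⁻¹ • Qmax ε

/-! The identity behind the theorem is the recursion `Q (k+1) + L * Q k = σ (k+1) • 1`, where
`Q k` is the matrix of `k`-arc diverging forests (entry `(i, j)`: those in which `i` lies in the
tree rooted at `j`) and `σ k` the total weight of `k`-arc forests. Entrywise it comes from
cutting the arc entering `i` (or attaching `i` by a new arc), and from an involution that
moves the arc entering `i` from one tail to another. Since `Q 0 = 1`, `σ 0 = 1` and both vanish
beyond the maximal forest size, `(1 + τ L) ∑ τ^k Q k` telescopes to `(∑ τ^k σ k) • 1`, and the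
scalar is positive because its `k = 0` term is `1`. -/

abbrev Reach (F : Finset (Fin n × Fin n)) : Fin n → Fin n → Prop :=
  Relation.ReflTransGen (arcRel F)

section Forests

variable {F F' : Finset (Fin n × Fin n)} {a b x y m v i j p : Fin n}

theorem Reach.mono (h : F ⊆ F') (hxy : Reach F x y) : Reach F' x y :=
  Relation.ReflTransGen.mono (fun _ _ hab => h hab) _ _ hxy

theorem Reach.exists_arc_of_ne (hxy : Reach F x y) (hne : x ≠ y) :
    ∃ z, Reach F x z ∧ (z, y) ∈ F := by
  rcases hxy.cases_tail with h | ⟨z, h1, h2⟩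
  · exact absurd h.symm hne
  · exact ⟨z, h1, h2⟩

theorem Reach.eq_of_root (hroot : ∀ u, (u, y) ∉ F) (h : Reach F x y) : x = y := by
  by_contra hne
  obtain ⟨z, -, hz⟩ := h.exists_arc_of_ne hne
  exact hroot z hz

theorem Reach.insert_cases (h : Reach (insert (m, v) F) x y) :
    Reach F x y ∨ (Reach F x m ∧ Reach F v y) := by
  induction h with
  | refl => exact Or.inl .refl
  | tail _ harc ih =>
    rcases Finset.mem_insert.mp harc with he | hmem
    · obtain ⟨rfl, rfl⟩ := Prod.mk.inj he
      exact Or.inr ⟨ih.elim id And.left, .refl⟩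
    · exact ih.imp (·.tail hmem) (fun h => ⟨h.1, h.2.tail hmem⟩)

theorem Reach.erase_cases {e : Fin n × Fin n} (h : Reach F x y) :
    Reach (F.erase e) x y ∨ Reach (F.erase e) e.2 y := by
  induction h with
  | refl => exact Or.inl .refl
  | @tail z y' _ harc ih =>
    by_cases he : (z, y') = e
    · exact Or.inr (he ▸ .refl)
    · have hmem : (z, y') ∈ F.erase e := Finset.mem_erase.mpr ⟨he, harc⟩
      exact ih.imp (·.tail hmem) (·.tail hmem)

theorem IsDivForest.subset (hF : IsDivForest F) (h : F' ⊆ F) : IsDivForest F' :=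
  ⟨fun v hv => hF.1 v (Relation.TransGen.mono (fun _ _ hab => h hab) _ _ hv),
   fun w z₁ z₂ h1 h2 => hF.2 w z₁ z₂ (h h1) (h h2)⟩

theorem IsSpForest.subset {ε : Fin n → Fin n → ℝ} (hF : IsSpForest ε F) (h : F' ⊆ F) :
    IsSpForest ε F' :=
  ⟨fun p hp => hF.1 p (h hp), hF.2.subset h⟩

theorem IsDivForest.ne_of_mem (hF : IsDivForest F) (h : (x, y) ∈ F) : x ≠ y := by
  rintro rfl
  exact hF.1 x (.single h)

theorem IsDivForest.not_reach_of_mem (hF : IsDivForest F) (hp : (p, i) ∈ F) :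
    ¬ Reach F i p := fun h =>
  hF.1 i (Relation.TransGen.tail' h hp)

theorem IsDivForest.reach_of_reach_of_mem (hF : IsDivForest F) (h : Reach F x i) (hxi : x ≠ i)
    (hp : (p, i) ∈ F) : Reach F x p := by
  obtain ⟨w, h1, h2⟩ := h.exists_arc_of_ne hxi
  rwa [hF.2 i p w hp h2]

theorem IsDivForest.reach_total (hF : IsDivForest F) (hac : Reach F a x) (hbc : Reach F b x) :
    Reach F a b ∨ Reach F b a := by
  induction hbc using Relation.ReflTransGen.head_induction_on with
  | refl => exact Or.inl hac
  | @head b' d harc _ ih =>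
    rcases ih with h | h
    · by_cases had : a = d
      · exact Or.inr (had ▸ .single harc)
      · exact Or.inl (hF.reach_of_reach_of_mem h had harc)
    · exact Or.inr (.head harc h)

theorem IsDivForest.eq_of_roots_reach (hF : IsDivForest F) (hj : ∀ u, (u, j) ∉ F)
    (hi : ∀ u, (u, i) ∉ F) (h1 : Reach F j m) (h2 : Reach F i m) : j = i := by
  rcases hF.reach_total h1 h2 with h | h
  · exact h.eq_of_root hi
  · exact (h.eq_of_root hj).symm

theorem IsDivForest.root_erase (hF : IsDivForest F) (hp : (p, i) ∈ F) :
    ∀ u, (u, i) ∉ F.erase (p, i) := fun u hu => by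
  obtain ⟨hne, hu⟩ := Finset.mem_erase.mp hu
  exact hne (by rw [hF.2 i u p hu hp])

theorem IsDivForest.insert_of_root (hF : IsDivForest F) (hroot : ∀ u, (u, v) ∉ F)
    (hnr : ¬ Reach F v m) : IsDivForest (insert (m, v) F) := by
  refine ⟨fun u hu => ?_, fun w z₁ z₂ h1 h2 => ?_⟩
  · obtain ⟨b, hub, hbu⟩ := Relation.TransGen.tail'_iff.mp hu
    rcases Finset.mem_insert.mp hbu with he | hmem
    · obtain ⟨rfl, rfl⟩ := Prod.mk.inj he
      exact hnr ((Reach.insert_cases hub).elim id And.left)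
    · rcases Reach.insert_cases hub with h | ⟨h1, h2⟩
      · exact hF.1 u (Relation.TransGen.tail' h hmem)
      · exact hnr ((h2.tail hmem).trans h1)
  · rcases Finset.mem_insert.mp h1 with he1 | hm1 <;>
      rcases Finset.mem_insert.mp h2 with he2 | hm2
    · exact (Prod.mk.inj he1).1.trans (Prod.mk.inj he2).1.symm
    · exact absurd hm2 ((Prod.mk.inj he1).2 ▸ hroot z₂)
    · exact absurd hm1 ((Prod.mk.inj he2).2 ▸ hroot z₁)
    · exact hF.2 w z₁ z₂ hm1 hm2

theorem root_insert_iff (hij : i ≠ j) : (∀ u, (u, j) ∉ insert (m, i) F) ↔ ∀ u, (u, j) ∉ F := by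
  simp only [Finset.mem_insert, Prod.mk.injEq, hij.symm, and_false, false_or]

theorem reach_insert_iff_of_root (hroot : ∀ u, (u, i) ∉ F) (hji : j ≠ i) :
    Reach (insert (m, i) F) j i ↔ Reach F j m := by
  refine ⟨fun h => ?_,
    fun h => (h.mono (Finset.subset_insert _ _)).tail (Finset.mem_insert_self _ _)⟩
  rcases Reach.insert_cases h with h | ⟨h, -⟩
  exacts [absurd (h.eq_of_root hroot) hji, h]

theorem IsSpForest.insert_of_root {ε : Fin n → Fin n → ℝ} (hF : IsSpForest ε F)
    (hroot : ∀ u, (u, v) ∉ F) (hnr : ¬ Reach F v m) (hpos : 0 < ε m v) :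
    IsSpForest ε (insert (m, v) F) := by
  refine ⟨fun q hq => ?_, hF.2.insert_of_root hroot hnr⟩
  rcases Finset.mem_insert.mp hq with rfl | hmem
  exacts [hpos, hF.1 q hmem]

end Forests

noncomputable def parent (F : Finset (Fin n × Fin n)) (i : Fin n) : Fin n :=
  if h : ∃ z, (z, i) ∈ F then h.choose else i

section Parent

variable {F : Finset (Fin n × Fin n)} {i m z : Fin n}

theorem parent_mem (h : ∃ z, (z, i) ∈ F) : (parent F i, i) ∈ F := by
  rw [parent, dif_pos h]
  exact h.choose_spec

theorem IsDivForest.parent_eq (hF : IsDivForest F) (h : (z, i) ∈ F) : parent F i = z :=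
  hF.2 i _ z (parent_mem ⟨z, h⟩) h

theorem IsDivForest.parent_insert (hF : IsDivForest (insert (m, i) F)) :
    parent (insert (m, i) F) i = m :=
  hF.parent_eq (Finset.mem_insert_self _ _)

end Parent

section Weights

variable {ε : Fin n → Fin n → ℝ} {F : Finset (Fin n × Fin n)} {k : ℕ} {i j : Fin n}

theorem mem_forestsK : F ∈ forestsK ε k ↔ IsSpForest ε F ∧ F.card = k := by
  simp [forestsK]

theorem fweight_insert {e : Fin n × Fin n} (h : e ∉ F) :
    fweight ε (insert e F) = ε e.1 e.2 * fweight ε F :=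
  Finset.prod_insert h

theorem isSpForest_empty : IsSpForest ε (∅ : Finset (Fin n × Fin n)) :=
  ⟨by simp, fun v hv => by simpa [arcRel] using Relation.TransGen.tail'_iff.mp hv, by simp⟩

theorem forestsK_zero : forestsK ε 0 = {∅} := by
  ext F
  simp only [mem_forestsK, Finset.mem_singleton, Finset.card_eq_zero]
  exact ⟨And.right, fun h => ⟨h ▸ isSpForest_empty, h⟩⟩

theorem swt_forestsK_zero : swt ε (forestsK ε 0) = 1 := by
  simp [swt, forestsK_zero, fweight]

theorem forestsKji_zero : forestsKji ε 0 j i = if i = j then {∅} else ∅ := by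
  ext F
  simp only [forestsKji, forestsK_zero, Finset.mem_filter, Finset.mem_singleton]
  split_ifs with hij
  · subst hij
    simp only [Finset.mem_singleton, and_iff_left_iff_imp]
    rintro rfl
    exact ⟨by simp, .refl⟩
  · simp only [Finset.notMem_empty, iff_false, not_and]
    rintro rfl - h
    exact hij (Reach.eq_of_root (by simp) h).symm

theorem card_le_maxArcs (h : IsSpForest ε F) : F.card ≤ maxArcs ε :=
  Finset.le_sup (Finset.mem_filter.mpr ⟨Finset.mem_univ F, h⟩)

theorem forestsK_maxArcs_succ : forestsK ε (maxArcs ε + 1) = ∅ := by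
  ext F
  simp only [mem_forestsK, Finset.notMem_empty, iff_false, not_and]
  intro h hc
  have := card_le_maxArcs h
  omega

theorem swt_nonneg {S : Finset (Finset (Fin n × Fin n))} (h : ∀ F ∈ S, IsSpForest ε F) :
    0 ≤ swt ε S :=
  Finset.sum_nonneg fun F hF => Finset.prod_nonneg fun p hp => ((h F hF).1 p hp).le

end Weights

noncomputable abbrev inArcs (ε : Fin n → Fin n → ℝ) (i : Fin n) : Finset (Fin n) :=
  Finset.univ.filter fun m => m ≠ i ∧ 0 < ε m i

section Cut

variable {ε : Fin n → Fin n → ℝ} {F : Finset (Fin n × Fin n)} {k : ℕ} {i m : Fin n}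

theorem sum_inArcs_eq (hnn : ∀ a b, 0 ≤ ε a b) (i : Fin n) (g : Fin n → ℝ) :
    ∑ m ∈ Finset.univ.filter (· ≠ i), ε m i * g m = ∑ m ∈ inArcs ε i, ε m i * g m := by
  refine (Finset.sum_subset (fun x hx => ?_) fun x hx hx' => ?_).symm
  · simp only [Finset.mem_filter, Finset.mem_univ, true_and] at hx ⊢
    exact hx.1
  · simp only [Finset.mem_filter, Finset.mem_univ, true_and, not_and, not_lt] at hx hx'
    rw [le_antisymm (hx' hx) (hnn x i), zero_mul]

/-- The bijection cuts the arc entering `i`; its inverse attaches the root `i` below `m`. -/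
theorem sum_forestsK_succ_not_root (φ : Finset (Fin n × Fin n) → ℝ) :
    ∑ F ∈ (forestsK ε (k + 1)).filter (fun F => ∃ u, (u, i) ∈ F), φ F =
      ∑ x ∈ (inArcs ε i).sigma
          (fun m => (forestsK ε k).filter fun F => (∀ u, (u, i) ∉ F) ∧ ¬ Reach F i m),
        φ (insert (x.1, i) x.2) := by
  refine Finset.sum_bij' (fun F _ => ⟨parent F i, F.erase (parent F i, i)⟩)
    (fun x _ => insert (x.1, i) x.2) (fun F hF => ?_) (fun x hx => ?_) (fun F hF => ?_)
    (fun x hx => ?_) (fun F hF => ?_)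
  all_goals simp only [Finset.mem_sigma, Finset.mem_filter, Finset.mem_univ, mem_forestsK,
    true_and] at *
  · obtain ⟨⟨hsp, hcard⟩, hi⟩ := hF
    have hp := parent_mem hi
    refine ⟨⟨hsp.2.ne_of_mem hp, hsp.1 _ hp⟩, ⟨hsp.subset (Finset.erase_subset _ _), ?_⟩,
      hsp.2.root_erase hp, fun h => hsp.2.not_reach_of_mem hp (h.mono (Finset.erase_subset _ _))⟩
    rw [Finset.card_erase_of_mem hp, hcard, Nat.add_sub_cancel]
  · obtain ⟨⟨-, hpos⟩, ⟨hsp, hcard⟩, hroot, hnr⟩ := hx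
    exact ⟨⟨hsp.insert_of_root hroot hnr hpos,
      by rw [Finset.card_insert_of_notMem (hroot _), hcard]⟩, _, Finset.mem_insert_self _ _⟩
  · exact Finset.insert_erase (parent_mem hF.2)
  · obtain ⟨-, ⟨hsp, -⟩, hroot, hnr⟩ := hx
    rw [(hsp.2.insert_of_root hroot hnr).parent_insert, Finset.erase_insert (hroot _)]
  · rw [Finset.insert_erase (parent_mem hF.2)]

end Cut

noncomputable def reparent (F : Finset (Fin n × Fin n)) (i m : Fin n) :
    Finset (Fin n × Fin n) :=
  insert (m, i) (F.erase (parent F i, i))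

section Reparent

variable {ε : Fin n → Fin n → ℝ} {F : Finset (Fin n × Fin n)} {i j m : Fin n}

theorem root_reparent (hj : ∀ u, (u, j) ∉ F) (hij : i ≠ j) : ∀ u, (u, j) ∉ reparent F i m :=
  fun u hu => by
    rcases Finset.mem_insert.mp hu with he | hu
    exacts [hij (Prod.mk.inj he).2.symm, hj u (Finset.mem_of_mem_erase hu)]

theorem IsSpForest.reparent (hF : IsSpForest ε F) (hi : ∃ u, (u, i) ∈ F)
    (hnr : ¬ Reach (F.erase (parent F i, i)) i m) (hpos : 0 < ε m i) :
    IsSpForest ε (reparent F i m) :=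
  (hF.subset (Finset.erase_subset _ _)).insert_of_root (hF.2.root_erase (parent_mem hi)) hnr hpos

theorem IsDivForest.card_reparent (hF : IsDivForest F) (hi : ∃ u, (u, i) ∈ F) :
    (reparent F i m).card = F.card := by
  have hp := parent_mem hi
  rw [reparent, Finset.card_insert_of_notMem (hF.root_erase hp _), Finset.card_erase_of_mem hp,
    Nat.sub_add_cancel (Finset.card_pos.mpr ⟨_, hp⟩)]

theorem IsDivForest.reparent_reparent (hF : IsDivForest F) (hi : ∃ u, (u, i) ∈ F)
    (hnr : ¬ Reach (F.erase (parent F i, i)) i m) :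
    parent (reparent F i m) i = m ∧ reparent (reparent F i m) i (parent F i) = F := by
  have hp := parent_mem hi
  have hpar : parent (reparent F i m) i = m :=
    ((hF.subset (Finset.erase_subset _ _)).insert_of_root (hF.root_erase hp) hnr).parent_insert
  refine ⟨hpar, ?_⟩
  rw [reparent, hpar, reparent, Finset.erase_insert (hF.root_erase hp _), Finset.insert_erase hp]

theorem IsDivForest.fweight_reparent (hF : IsDivForest F) (hi : ∃ u, (u, i) ∈ F) :
    ε m i * fweight ε F = ε (parent F i) i * fweight ε (reparent F i m) := by
  have hp := parent_mem hi
  have hcut := fweight_insert (ε := ε) (Finset.notMem_erase (parent F i, i) F)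
  rw [Finset.insert_erase hp] at hcut
  rw [reparent, fweight_insert (hF.root_erase hp _), hcut, mul_left_comm]

end Reparent

section Swap

variable {ε : Fin n → Fin n → ℝ} {F : Finset (Fin n × Fin n)} {k : ℕ} {i j m : Fin n}

theorem not_root_and_not_reach_erase_of_reach (hij : i ≠ j)
    (hji : Reach F j i) (hjm : ¬ Reach F j m) :
    (∃ u, (u, i) ∈ F) ∧ ¬ Reach (F.erase (parent F i, i)) i m := by
  obtain ⟨u, -, hu⟩ := hji.exists_arc_of_ne hij.symm
  exact ⟨⟨u, hu⟩, fun h => hjm (hji.trans (h.mono (Finset.erase_subset _ _)))⟩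

theorem IsDivForest.not_reach_erase_of_not_reach (hF : IsDivForest F) (hij : i ≠ j)
    (hj : ∀ u, (u, j) ∉ F) (hjm : Reach F j m) (hji : ¬ Reach F j i) :
    ¬ Reach (F.erase (parent F i, i)) i m := fun h => by
  rcases hF.reach_total hjm (h.mono (Finset.erase_subset _ _)) with h' | h'
  exacts [hji h', hij (h'.eq_of_root hj)]

theorem IsDivForest.reach_reparent_of_reach (hF : IsDivForest F) (hij : i ≠ j)
    (hji : Reach F j i) (hjm : ¬ Reach F j m) :
    Reach (reparent F i m) j (parent F i) ∧ ¬ Reach (reparent F i m) j i := by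
  obtain ⟨hi, -⟩ := not_root_and_not_reach_erase_of_reach hij hji hjm
  have hp := parent_mem hi
  have hsub : F.erase (parent F i, i) ⊆ reparent F i m := Finset.subset_insert _ _
  refine ⟨?_, fun h => ?_⟩
  · rcases Reach.erase_cases (e := (parent F i, i)) (hF.reach_of_reach_of_mem hji hij.symm hp)
      with h | h
    exacts [h.mono hsub, absurd (h.mono (Finset.erase_subset _ _)) (hF.not_reach_of_mem hp)]
  · rcases Reach.insert_cases h with h | ⟨h, -⟩
    · exact hij (h.eq_of_root (hF.root_erase hp)).symm
    · exact hjm (h.mono (Finset.erase_subset _ _))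

theorem IsDivForest.reach_reparent_of_not_reach (hF : IsDivForest F) (hij : i ≠ j)
    (hj : ∀ u, (u, j) ∉ F) (hi : ∃ u, (u, i) ∈ F) (hjm : Reach F j m) (hji : ¬ Reach F j i) :
    Reach (reparent F i m) j i ∧ ¬ Reach (reparent F i m) j (parent F i) := by
  have hp := parent_mem hi
  have hnr := hF.not_reach_erase_of_not_reach hij hj hjm hji
  refine ⟨?_, fun h => ?_⟩
  · rcases Reach.erase_cases (e := (parent F i, i)) hjm with h | h
    · exact (h.mono (Finset.subset_insert _ _)).tail (Finset.mem_insert_self _ _)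
    · exact absurd h hnr
  · rcases Reach.insert_cases h with h | ⟨-, h⟩
    · exact hji ((h.mono (Finset.erase_subset _ _)).tail hp)
    · exact hF.not_reach_of_mem hp (h.mono (Finset.erase_subset _ _))

/-- Moving the arc entering `i` to the tail `m` is an involution exchanging the two families. -/
theorem sum_reparent_swap (hij : i ≠ j) :
    ∑ x ∈ (inArcs ε i).sigma (fun m => (forestsK ε k).filter
        fun F => ((∀ u, (u, j) ∉ F) ∧ Reach F j i) ∧ ¬ Reach F j m), ε x.1 i * fweight ε x.2 =
      ∑ x ∈ (inArcs ε i).sigma (fun m => (forestsK ε k).filter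
        fun F => (((∀ u, (u, j) ∉ F) ∧ Reach F j m) ∧ ¬ Reach F j i) ∧ ¬ ∀ u, (u, i) ∉ F),
        ε x.1 i * fweight ε x.2 := by
  refine Finset.sum_bij' (fun x _ => ⟨parent x.2 i, reparent x.2 i x.1⟩)
    (fun x _ => ⟨parent x.2 i, reparent x.2 i x.1⟩) (fun x hx => ?_) (fun x hx => ?_)
    (fun x hx => ?_) (fun x hx => ?_) (fun x hx => ?_)
  all_goals simp only [Finset.mem_sigma, Finset.mem_filter, Finset.mem_univ, mem_forestsK,
    true_and, not_forall_not] at hx ⊢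
  · obtain ⟨⟨-, hpos⟩, ⟨hsp, hcard⟩, ⟨hj, hji⟩, hjm⟩ := hx
    obtain ⟨hi, hnr⟩ := not_root_and_not_reach_erase_of_reach hij hji hjm
    have hp := parent_mem hi
    obtain ⟨hjp, hji'⟩ := hsp.2.reach_reparent_of_reach hij hji hjm
    exact ⟨⟨hsp.2.ne_of_mem hp, hsp.1 _ hp⟩, ⟨hsp.reparent hi hnr hpos,
      (hsp.2.card_reparent hi).trans hcard⟩, ⟨⟨root_reparent hj hij, hjp⟩, hji'⟩,
      _, Finset.mem_insert_self _ _⟩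
  · obtain ⟨⟨-, hpos⟩, ⟨hsp, hcard⟩, ⟨⟨hj, hjm⟩, hji⟩, hi⟩ := hx
    have hnr := hsp.2.not_reach_erase_of_not_reach hij hj hjm hji
    have hp := parent_mem hi
    exact ⟨⟨hsp.2.ne_of_mem hp, hsp.1 _ hp⟩, ⟨hsp.reparent hi hnr hpos,
      (hsp.2.card_reparent hi).trans hcard⟩,
      ⟨root_reparent hj hij, (hsp.2.reach_reparent_of_not_reach hij hj hi hjm hji).1⟩,
      (hsp.2.reach_reparent_of_not_reach hij hj hi hjm hji).2⟩
  · obtain ⟨-, ⟨hsp, -⟩, ⟨-, hji⟩, hjm⟩ := hx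
    obtain ⟨hi, hnr⟩ := not_root_and_not_reach_erase_of_reach hij hji hjm
    obtain ⟨hpar, hre⟩ := hsp.2.reparent_reparent hi hnr
    rw [hpar, hre]
  · obtain ⟨-, ⟨hsp, -⟩, ⟨⟨hj, hjm⟩, hji⟩, hi⟩ := hx
    obtain ⟨hpar, hre⟩ :=
      hsp.2.reparent_reparent hi (hsp.2.not_reach_erase_of_not_reach hij hj hjm hji)
    rw [hpar, hre]
  · obtain ⟨-, ⟨hsp, -⟩, ⟨-, hji⟩, hjm⟩ := hx
    exact hsp.2.fweight_reparent (not_root_and_not_reach_erase_of_reach hij hji hjm).1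

end Swap

section Recursion

variable {ε : Fin n → Fin n → ℝ} {k : ℕ} {i j : Fin n}

theorem swt_filter_split (S : Finset (Finset (Fin n × Fin n))) (P Q : Finset (Fin n × Fin n) → Prop)
    [DecidablePred P] [DecidablePred Q] :
    swt ε (S.filter P) =
      swt ε (S.filter fun F => P F ∧ Q F) + swt ε (S.filter fun F => P F ∧ ¬ Q F) := by
  rw [swt, ← Finset.sum_filter_add_sum_filter_not _ Q, Finset.filter_filter, Finset.filter_filter]
  rfl

theorem forestsKji_self : forestsKji ε k i i = (forestsK ε k).filter fun F => ∀ u, (u, i) ∉ F :=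
  Finset.filter_congr fun _ _ => and_iff_left .refl

theorem sum_sigma_filter_mul_fweight (A : Finset (Fin n)) (S : Finset (Finset (Fin n × Fin n)))
    (P : Fin n → Finset (Fin n × Fin n) → Prop) [∀ m, DecidablePred (P m)] :
    ∑ x ∈ A.sigma (fun m => S.filter (P m)), ε x.1 i * fweight ε x.2 =
      ∑ m ∈ A, ε m i * swt ε (S.filter (P m)) := by
  simp only [Finset.sum_sigma, swt, Finset.mul_sum]

theorem swt_filter_forestsK_succ_not_root (P : Finset (Fin n × Fin n) → Prop)
    [DecidablePred P] :
    swt ε ((forestsK ε (k + 1)).filter fun F => (∃ u, (u, i) ∈ F) ∧ P F) =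
      ∑ m ∈ inArcs ε i, ε m i * swt ε ((forestsK ε k).filter
        fun F => ((∀ u, (u, i) ∉ F) ∧ ¬ Reach F i m) ∧ P (insert (m, i) F)) := by
  conv_lhs => rw [swt, ← Finset.filter_filter, Finset.sum_filter, sum_forestsK_succ_not_root,
    Finset.sum_sigma]
  refine Finset.sum_congr rfl fun m _ => ?_
  rw [swt, Finset.sum_filter, Finset.sum_filter, Finset.mul_sum]
  refine Finset.sum_congr rfl fun F _ => ?_
  by_cases hroot : ∀ u, (u, i) ∉ F
  · simp only [fweight_insert (hroot m), hroot, ← ite_and, mul_ite, mul_zero]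
  · simp only [hroot, false_and, if_false, mul_zero]

theorem swt_forestsKji_succ_self_add (hnn : ∀ a b, 0 ≤ ε a b) :
    swt ε (forestsKji ε (k + 1) i i) +
        ∑ m ∈ Finset.univ.filter (· ≠ i), ε m i * swt ε (forestsKji ε k i i) =
      swt ε (forestsK ε (k + 1)) +
        ∑ m ∈ Finset.univ.filter (· ≠ i), ε m i * swt ε (forestsKji ε k i m) := by
  have hcut := swt_filter_forestsK_succ_not_root (ε := ε) (k := k) (i := i) fun _ => True
  simp only [and_true] at hcut
  have htotal : swt ε (forestsK ε (k + 1)) = swt ε (forestsKji ε (k + 1) i i) +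
      swt ε ((forestsK ε (k + 1)).filter fun F => ∃ u, (u, i) ∈ F) := by
    rw [forestsKji_self, swt, swt, swt,
      ← Finset.sum_filter_add_sum_filter_not _ (fun F => ∀ u, (u, i) ∉ F)]
    simp only [not_forall_not]
  rw [sum_inArcs_eq hnn, sum_inArcs_eq hnn, htotal, hcut, add_assoc, ← Finset.sum_add_distrib]
  refine congrArg _ (Finset.sum_congr rfl fun m _ => ?_)
  rw [← mul_add, forestsKji_self, swt_filter_split _ _ (fun F => Reach F i m), add_comm]
  rfl

theorem swt_forestsKji_succ_of_ne (hij : i ≠ j) :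
    swt ε (forestsKji ε (k + 1) j i) = ∑ m ∈ inArcs ε i, ε m i * swt ε
      ((forestsK ε k).filter fun F => (((∀ u, (u, j) ∉ F) ∧ Reach F j m) ∧ ¬ Reach F j i) ∧
        ∀ u, (u, i) ∉ F) := by
  have hnonroot : forestsKji ε (k + 1) j i = (forestsK ε (k + 1)).filter
      fun F => (∃ u, (u, i) ∈ F) ∧ (∀ u, (u, j) ∉ F) ∧ Reach F j i :=
    Finset.filter_congr fun F _ =>
      ⟨fun h => ⟨(Reach.exists_arc_of_ne h.2 hij.symm).imp fun _ => And.right, h⟩, And.right⟩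
  rw [hnonroot, swt_filter_forestsK_succ_not_root]
  refine Finset.sum_congr rfl fun m _ => congrArg _ (congrArg _ (Finset.filter_congr
    fun F hF => ?_))
  have hF := (mem_forestsK.mp hF).1.2
  rw [root_insert_iff hij]
  constructor
  · rintro ⟨⟨hi, -⟩, hj, hjm⟩
    rw [reach_insert_iff_of_root hi hij.symm] at hjm
    exact ⟨⟨⟨hj, hjm⟩, fun h => hij (h.eq_of_root hi).symm⟩, hi⟩
  · rintro ⟨⟨⟨hj, hjm⟩, -⟩, hi⟩
    exact ⟨⟨hi, fun h => hij (hF.eq_of_roots_reach hj hi hjm h).symm⟩, hj,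
      (reach_insert_iff_of_root hi hij.symm).2 hjm⟩

theorem swt_forestsKji_succ_add_of_ne (hnn : ∀ a b, 0 ≤ ε a b) (hij : i ≠ j) :
    swt ε (forestsKji ε (k + 1) j i) +
        ∑ m ∈ Finset.univ.filter (· ≠ i), ε m i * swt ε (forestsKji ε k j i) =
      ∑ m ∈ Finset.univ.filter (· ≠ i), ε m i * swt ε (forestsKji ε k j m) := by
  -- Split both sides by whether `j` reaches `i`, `j` reaches `m` and `i` is a root: the two
  -- pieces left unmatched are exchanged by `sum_reparent_swap`.
  have hswap := sum_reparent_swap (ε := ε) (k := k) hij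
  rw [sum_sigma_filter_mul_fweight, sum_sigma_filter_mul_fweight] at hswap
  have hsplit_i : ∑ m ∈ inArcs ε i, ε m i * swt ε (forestsKji ε k j i) =
      ∑ m ∈ inArcs ε i, ε m i * swt ε ((forestsK ε k).filter
        fun F => ((∀ u, (u, j) ∉ F) ∧ Reach F j m) ∧ Reach F j i) +
      ∑ m ∈ inArcs ε i, ε m i * swt ε ((forestsK ε k).filter
        fun F => ((∀ u, (u, j) ∉ F) ∧ Reach F j i) ∧ ¬ Reach F j m) := by
    rw [← Finset.sum_add_distrib]
    refine Finset.sum_congr rfl fun m _ => ?_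
    rw [← mul_add, forestsKji, swt_filter_split _ _ (fun F => Reach F j m),
      Finset.filter_congr fun F _ => and_right_comm]
  have hsplit_m : ∑ m ∈ inArcs ε i, ε m i * swt ε (forestsKji ε k j m) =
      ∑ m ∈ inArcs ε i, ε m i * swt ε ((forestsK ε k).filter
        fun F => ((∀ u, (u, j) ∉ F) ∧ Reach F j m) ∧ Reach F j i) +
      ∑ m ∈ inArcs ε i, ε m i * swt ε ((forestsK ε k).filter fun F =>
        (((∀ u, (u, j) ∉ F) ∧ Reach F j m) ∧ ¬ Reach F j i) ∧ ∀ u, (u, i) ∉ F) +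
      ∑ m ∈ inArcs ε i, ε m i * swt ε ((forestsK ε k).filter fun F =>
        (((∀ u, (u, j) ∉ F) ∧ Reach F j m) ∧ ¬ Reach F j i) ∧ ¬ ∀ u, (u, i) ∉ F) := by
    rw [← Finset.sum_add_distrib, ← Finset.sum_add_distrib]
    refine Finset.sum_congr rfl fun m _ => ?_
    rw [← mul_add, ← mul_add, forestsKji, swt_filter_split _ _ (fun F => Reach F j i),
      swt_filter_split _ (fun F => ((∀ u, (u, j) ∉ F) ∧ Reach F j m) ∧ ¬ Reach F j i)
        (fun F => ∀ u, (u, i) ∉ F), add_assoc]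
  rw [sum_inArcs_eq hnn, sum_inArcs_eq hnn, swt_forestsKji_succ_of_ne hij, hsplit_i, hsplit_m,
    hswap]
  ring

end Recursion

theorem one_add_smul_mul_sum_pow_smul {R A : Type*} [CommRing R] [Ring A] [Algebra R A]
    (L : A) (Q : ℕ → A) (s : ℕ → R) (τ : R) (h0 : Q 0 = s 0 • 1)
    (hrec : ∀ k, Q (k + 1) + L * Q k = s (k + 1) • 1) (N : ℕ) :
    (1 + τ • L) * ∑ k ∈ Finset.range N, τ ^ k • Q k + τ ^ N • Q N =
      (∑ k ∈ Finset.range (N + 1), τ ^ k * s k) • 1 := by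
  induction N with
  | zero => simp [h0]
  | succ N ih =>
    calc (1 + τ • L) * ∑ k ∈ Finset.range (N + 1), τ ^ k • Q k + τ ^ (N + 1) • Q (N + 1)
        = ((1 + τ • L) * ∑ k ∈ Finset.range N, τ ^ k • Q k + τ ^ N • Q N) +
            τ ^ (N + 1) • (Q (N + 1) + L * Q N) := by
          simp only [Finset.sum_range_succ, mul_add, add_mul, one_mul, mul_smul_comm,
            smul_mul_assoc]
          module
      _ = (∑ k ∈ Finset.range (N + 1 + 1), τ ^ k * s k) • 1 := by
          rw [ih, hrec, smul_smul, ← add_smul, ← Finset.sum_range_succ]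

noncomputable def forestMatrix (ε : Fin n → Fin n → ℝ) (k : ℕ) : Matrix (Fin n) (Fin n) ℝ :=
  Matrix.of fun i j => swt ε (forestsKji ε k j i)

section ForestMatrix

variable {ε : Fin n → Fin n → ℝ}

theorem kirchhoff_mul_apply (M : Matrix (Fin n) (Fin n) ℝ) (i j : Fin n) :
    (Kirchhoff ε * M) i j = (∑ m ∈ Finset.univ.filter (· ≠ i), ε m i) * M i j -
      ∑ m ∈ Finset.univ.filter (· ≠ i), ε m i * M m j := by
  rw [Matrix.mul_apply, ← Finset.add_sum_erase _ _ (Finset.mem_univ i), ← Finset.filter_ne',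
    sub_eq_add_neg, ← Finset.sum_neg_distrib]
  refine congrArg₂ _ (by simp [Kirchhoff]) (Finset.sum_congr rfl fun m hm => ?_)
  simp [Kirchhoff, (Finset.mem_filter.mp hm).2.symm]

theorem forestMatrix_succ_add_kirchhoff_mul (hnn : ∀ a b, 0 ≤ ε a b) (k : ℕ) :
    forestMatrix ε (k + 1) + Kirchhoff ε * forestMatrix ε k = swt ε (forestsK ε (k + 1)) • 1 := by
  ext i j
  rw [Matrix.add_apply, kirchhoff_mul_apply, Matrix.smul_apply, Matrix.one_apply, Finset.sum_mul]
  simp only [forestMatrix, Matrix.of_apply, smul_eq_mul, mul_ite, mul_one, mul_zero]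
  split_ifs with hij
  · subst hij
    linarith [swt_forestsKji_succ_self_add (ε := ε) (k := k) (i := i) hnn]
  · linarith [swt_forestsKji_succ_add_of_ne (ε := ε) (k := k) hnn hij]

theorem forestMatrix_zero : forestMatrix ε 0 = 1 := by
  ext i j
  simp only [forestMatrix, Matrix.of_apply, forestsKji_zero, Matrix.one_apply]
  split_ifs <;> simp [swt, fweight]

theorem forestMatrix_maxArcs_succ : forestMatrix ε (maxArcs ε + 1) = 0 := by
  ext i j
  simp [forestMatrix, forestsKji, forestsK_maxArcs_succ, swt]

end ForestMatrix

theorem stmt12_general (ε : Fin n → Fin n → ℝ) (hnonneg : ∀ i j, 0 ≤ ε i j)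
    (τ : ℝ) (hτ : 0 < τ) :
    (1 + τ • Kirchhoff ε).det ≠ 0 ∧
      ∀ i j, (1 + τ • Kirchhoff ε)⁻¹ i j =
        (∑ k ∈ Finset.range (maxArcs ε + 1), τ ^ k * swt ε (forestsKji ε k j i)) /
          (∑ k ∈ Finset.range (maxArcs ε + 1), τ ^ k * swt ε (forestsK ε k)) := by
  set c := ∑ k ∈ Finset.range (maxArcs ε + 1), τ ^ k * swt ε (forestsK ε k) with hc_def
  have hc : 0 < c := by
    rw [hc_def, Finset.sum_range_succ']
    refine add_pos_of_nonneg_of_pos (Finset.sum_nonneg fun k _ => mul_nonneg (by positivity)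
      (swt_nonneg fun F hF => (mem_forestsK.mp hF).1)) (by simp [swt_forestsK_zero])
  have hres := one_add_smul_mul_sum_pow_smul (Kirchhoff ε) (forestMatrix ε)
    (fun k => swt ε (forestsK ε k)) τ (by simp [forestMatrix_zero, swt_forestsK_zero])
    (forestMatrix_succ_add_kirchhoff_mul hnonneg) (maxArcs ε + 1)
  rw [forestMatrix_maxArcs_succ, smul_zero, add_zero, Finset.sum_range_succ _ (maxArcs ε + 1),
    forestsK_maxArcs_succ, swt, Finset.sum_empty, mul_zero, add_zero] at hres
  have hinv : (1 + τ • Kirchhoff ε) *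
      (c⁻¹ • ∑ k ∈ Finset.range (maxArcs ε + 1), τ ^ k • forestMatrix ε k) = 1 := by
    rw [Matrix.mul_smul, hres, smul_smul, inv_mul_cancel₀ hc.ne', one_smul]
  refine ⟨Matrix.det_ne_zero_of_right_inverse hinv, fun i j => ?_⟩
  rw [Matrix.inv_eq_right_inv hinv, div_eq_inv_mul]
  simp [Matrix.sum_apply, forestMatrix]

/-- Parametric matrix-forest theorem for digraphs. -/
theorem stmt12 (ε : Fin n → Fin n → ℝ) (hnonneg : ∀ i j, 0 ≤ ε i j)
    (hloop : ∀ i, ε i i = 0) (τ : ℝ) (hτ : 0 < τ) :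
    (1 + τ • Kirchhoff ε).det ≠ 0 ∧
      ∀ i j, (1 + τ • Kirchhoff ε)⁻¹ i j =
        (∑ k ∈ Finset.range (maxArcs ε + 1), τ ^ k * swt ε (forestsKji ε k j i)) /
          (∑ k ∈ Finset.range (maxArcs ε + 1), τ ^ k * swt ε (forestsK ε k)) :=
  stmt12_general ε hnonneg τ hτ
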